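/- Let χ be a Dirichlet character of conductor d. For every positive integer w and every k ≥ 0: w^{k-1} Σ_{i=0}^{d w − 1} χ(i) B_{k,χ}(i/w) = Σ_{i=0}^{d-1} χ(i) B_{k,χ}(w i). -/

import Mathlib

open Finset

/-- Generalized Bernoulli polynomial attached to a Dirichlet character, via the
standard closed formula `B_{n,χ}(x) = d^{n-1} ∑_{a<d} χ(a) B_n((a+x)/d)` which is
equivalent to the generating function definition
`∑_{a<d} χ(a) t e^{at} e^{xt}/(e^{dt}-1) = ∑ B_{n,χ}(x) tⁿ/n!`. -/
noncomputable def genBernoulliPoly {d : ℕ} (χ : DirichletCharacter ℂ d) (n : ℕ) (x : ℂ) : ℂ :=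
  (d : ℂ) ^ ((n : ℤ) - 1) *
    ∑ a ∈ Finset.range d, χ (a : ZMod d) * Polynomial.aeval (((a : ℂ) + x) / d) (Polynomial.bernoulli n)

/-- Generalized Bernoulli number `B_{n,χ} = B_{n,χ}(0)`. -/
noncomputable def genBernoulli {d : ℕ} (χ : DirichletCharacter ℂ d) (n : ℕ) : ℂ :=
  genBernoulliPoly χ n 0

/-!
Raabe's multiplication formula `B_k(w x) = w^(k-1) ∑_{s<w} B_k(x + s/w)` follows from the
generating function `t e^(xt) / (e^t - 1)`: rescaling `t ↦ t/w` turns `e^t - 1` into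
`(E - 1) ∑_{s<w} E^s` with `E = e^(t/w)`. Applied to each term of `B_{k,χ}`, it shows that
`B_{k,χ}` does not change when the period `d` of `χ` is replaced by `d w`. In period `d w`
both sides of the theorem become `(d w)^(k-1) ∑_{i<dw} ∑_{a<d} χ(i) χ(a) B_k((i + w a)/(d w))`.
-/

open PowerSeries Nat

theorem Finset.sum_range_mul_eq_sum_sum {M : Type*} [AddCommMonoid M] (f : ℕ → M) (m n : ℕ) :
    ∑ i ∈ range (m * n), f i = ∑ s ∈ range m, ∑ a ∈ range n, f (a + n * s) := by
  rw [← Fin.sum_univ_eq_sum_range, ← finProdFinEquiv.sum_comp, Fintype.sum_prod_type,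
    ← Fin.sum_univ_eq_sum_range]
  exact Fintype.sum_congr _ _ fun s => Fin.sum_univ_eq_sum_range (fun a => f (a + n * s)) n

namespace Polynomial

variable {K : Type*} [Field K] [CharZero K]

noncomputable def bernoulliEGF (x : K) : K⟦X⟧ :=
  PowerSeries.mk fun n => aeval x ((1 / n ! : ℚ) • bernoulli n)

theorem coeff_bernoulliEGF (x : K) (n : ℕ) :
    PowerSeries.coeff n (bernoulliEGF x) = (n ! : K)⁻¹ * aeval x (bernoulli n) := by
  simp [bernoulliEGF, Rat.smul_def, div_eq_inv_mul]

theorem sum_bernoulliEGF_add_div {w : ℕ} (hw : w ≠ 0) (x : K) :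
    ∑ s ∈ range w, bernoulliEGF (x + s / w) =
      PowerSeries.C (w : K) * rescale (w : K)⁻¹ (bernoulliEGF (w * x)) := by
  have hw' : (w : K) ≠ 0 := Nat.cast_ne_zero.mpr hw
  have hexp : exp K - 1 ≠ 0 := fun h => by
    simpa [coeff_exp] using congrArg (PowerSeries.coeff 1) h
  set E := rescale (w : K)⁻¹ (exp K)
  have hEpow (s : ℕ) : E ^ s = rescale ((s : K) / w) (exp K) := by
    rw [← map_pow, exp_pow_eq_rescale_exp, rescale_rescale, div_eq_mul_inv]
  have hgeom : (E - 1) * ∑ s ∈ range w, E ^ s = exp K - 1 := by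
    rw [mul_geom_sum, hEpow, div_self hw', rescale_one, RingHom.id_apply]
  have hrescaled : rescale (w : K)⁻¹ (bernoulliEGF (w * x)) * (E - 1) =
      PowerSeries.C (w : K)⁻¹ * (PowerSeries.X * rescale x (exp K)) := by
    have h := congrArg (rescale (w : K)⁻¹) (bernoulli_generating_function (w * x : K))
    have hx : (w : K) * x * (w : K)⁻¹ = x := by field_simp
    rw [map_mul, map_sub, map_one, map_mul, rescale_X, rescale_rescale, hx] at h
    rw [bernoulliEGF, h]
    ring
  refine mul_right_cancel₀ hexp ?_
  calc (∑ s ∈ range w, bernoulliEGF (x + s / w)) * (exp K - 1)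
      = PowerSeries.X * rescale x (exp K) * ∑ s ∈ range w, E ^ s := by
        simp only [sum_mul, mul_sum, hEpow, mul_assoc, exp_mul_exp_eq_exp_add]
        exact sum_congr rfl fun s _ => bernoulli_generating_function _
    _ = _ := by
        rw [← hgeom, ← mul_assoc, mul_assoc (PowerSeries.C (w : K)), hrescaled, ← mul_assoc,
          ← map_mul, mul_inv_cancel₀ hw', map_one, one_mul, mul_assoc]

theorem aeval_natCast_mul_bernoulli {w : ℕ} (hw : w ≠ 0) (x : K) (k : ℕ) :
    aeval (w * x) (bernoulli k) =
      (w : K) ^ ((k : ℤ) - 1) * ∑ s ∈ range w, aeval (x + s / w) (bernoulli k) := by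
  have hw' : (w : K) ≠ 0 := Nat.cast_ne_zero.mpr hw
  have hk : (k ! : K) ≠ 0 := Nat.cast_ne_zero.mpr k.factorial_ne_zero
  have h := congrArg (PowerSeries.coeff k) (sum_bernoulliEGF_add_div hw x)
  simp only [map_sum, PowerSeries.coeff_C_mul, PowerSeries.coeff_rescale, coeff_bernoulliEGF,
    ← mul_sum] at h
  have hsum : ∑ s ∈ range w, aeval (x + s / w) (bernoulli k) =
      w * ((w : K)⁻¹ ^ k * aeval (w * x) (bernoulli k)) :=
    mul_left_cancel₀ (inv_ne_zero hk) (by rw [h]; ring)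
  rw [hsum, zpow_sub₀ hw', zpow_natCast, zpow_one, div_mul_eq_mul_div, mul_div_assoc,
    mul_div_cancel_left₀ _ hw', ← mul_assoc, ← mul_pow, mul_inv_cancel₀ hw', one_pow, one_mul]

end Polynomial

theorem genBernoulliPoly_eq_sum_range_mul {d : ℕ} (χ : DirichletCharacter ℂ d) (k : ℕ) {w : ℕ}
    (hw : w ≠ 0) (y : ℂ) :
    genBernoulliPoly χ k y = ((d : ℂ) * w) ^ ((k : ℤ) - 1) *
      ∑ i ∈ range (d * w), χ (i : ZMod d) * Polynomial.aeval ((i + y) / (d * w))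
        (Polynomial.bernoulli k) := by
  have hw' : (w : ℂ) ≠ 0 := Nat.cast_ne_zero.mpr hw
  rw [genBernoulliPoly, mul_comm d w, sum_range_mul_eq_sum_sum, sum_comm, mul_zpow, mul_assoc]
  congr 1
  rw [mul_sum]
  refine sum_congr rfl fun a ha => ?_
  have hd : (d : ℂ) ≠ 0 := Nat.cast_ne_zero.mpr (ne_zero_of_lt (mem_range.mp ha))
  have hχ (s : ℕ) : χ ((a + d * s : ℕ) : ZMod d) = χ a := by simp
  have harg (s : ℕ) : (((a + d * s : ℕ) : ℂ) + y) / (d * w) = (a + y) / (d * w) + s / w := by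
    push_cast
    field_simp
    ring
  have hscale : ((a : ℂ) + y) / d = w * ((a + y) / (d * w)) := by field_simp
  rw [hscale, Polynomial.aeval_natCast_mul_bernoulli hw, mul_left_comm, mul_sum]
  simp only [hχ, harg]

theorem stmt7_general {d : ℕ} (χ : DirichletCharacter ℂ d)
    (w : ℕ) (hw : 0 < w) (k : ℕ) :
    (w : ℂ) ^ ((k : ℤ) - 1) * ∑ i ∈ Finset.range (d * w),
        χ (i : ZMod d) * genBernoulliPoly χ k ((i : ℂ) / w) =
      ∑ i ∈ Finset.range d, χ (i : ZMod d) * genBernoulliPoly χ k ((w : ℂ) * i) := by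
  have hw' : (w : ℂ) ≠ 0 := Nat.cast_ne_zero.mpr hw.ne'
  have harg (i a : ℕ) : ((a : ℂ) + i / w) / d = (i + w * a) / (d * w) := by
    rw [mul_comm (d : ℂ), ← div_div, add_div (i : ℂ), mul_div_cancel_left₀ _ hw', add_comm]
  calc (w : ℂ) ^ ((k : ℤ) - 1) * ∑ i ∈ range (d * w), χ i * genBernoulliPoly χ k (i / w)
      = ∑ i ∈ range (d * w), ∑ a ∈ range d, ((d : ℂ) * w) ^ ((k : ℤ) - 1) *
          (χ i * χ a * Polynomial.aeval (((i : ℂ) + w * a) / (d * w))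
            (Polynomial.bernoulli k)) := by
        rw [mul_sum]
        refine sum_congr rfl fun i _ => ?_
        rw [genBernoulliPoly, mul_sum, mul_sum, mul_sum]
        refine sum_congr rfl fun a _ => ?_
        rw [harg, mul_zpow]
        ring
    _ = ∑ a ∈ range d, χ a * genBernoulliPoly χ k (w * (a : ℂ)) := by
        rw [sum_comm]
        refine sum_congr rfl fun a _ => ?_
        rw [genBernoulliPoly_eq_sum_range_mul χ k hw.ne', mul_sum, mul_sum]
        refine sum_congr rfl fun i _ => ?_
        rw [add_comm (i : ℂ)]
        ring

theorem stmt7 {d : ℕ} (hd : 0 < d) (χ : DirichletCharacter ℂ d)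
    (w : ℕ) (hw : 0 < w) (k : ℕ) :
    (w : ℂ) ^ ((k : ℤ) - 1) * ∑ i ∈ Finset.range (d * w),
        χ (i : ZMod d) * genBernoulliPoly χ k ((i : ℂ) / w) =
      ∑ i ∈ Finset.range d, χ (i : ZMod d) * genBernoulliPoly χ k ((w : ℂ) * i) :=
  stmt7_general χ w hw k
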